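/- arXiv:1606.09625 — 4 statements merged into one kernel-verified Lean document; each statement's English description precedes it below -/
import Mathlib

section
/- Let ρ be a regular representation of A_{q,n} on an n-dimensional k-vector space V. Then the quotient A_{q,n}/ker(ρ) (equivalently, the image ρ(A_{q,n}) ⊆ End_k(V)) is isomorphic as a k-algebra to k[z]/(z^n). -/
noncomputable section

/-- The ring of `n`-nil polynomials `A_{q,n} = k[x_1,…,x_q]/m_0^n`. -/
abbrev Aqn (k : Type) [Field k] (q n : ℕ) : Type :=
  MvPolynomial (Fin q) k ⧸
    (Ideal.span (Set.range (MvPolynomial.X : Fin q → MvPolynomial (Fin q) k))) ^ n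

/-- The image of the variable `x_i` in `A_{q,n}`. -/
def xA (k : Type) [Field k] (q n : ℕ) (i : Fin q) : Aqn k q n :=
  Ideal.Quotient.mk _ (MvPolynomial.X i)

/-- The maximal ideal `m` of `A_{q,n}` generated by `x_1, …, x_q`. -/
def mA (k : Type) [Field k] (q n : ℕ) : Ideal (Aqn k q n) :=
  Ideal.span (Set.range (xA k q n))

/-!
Let `u ∈ m` with `ρ(u)^(n-1) ≠ 0`. Since `m^n = 0`, `N = ρ(u)` is nilpotent of index exactly
`n = dim V`, so for any `v` with `N^(n-1) v ≠ 0` the vectors `v, N v, …, N^(n-1) v` form a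
basis: `v` is a cyclic vector of `N`. An endomorphism commuting with an operator that has a cyclic
vector is a polynomial in that operator, and `A_{q,n}` is commutative, so the image of `ρ` is
`k[N]`. Finally the minimal polynomial of `N` is `X^n`, whence `k[N] ≅ k[X]/(X^n)`.
-/

open Polynomial

theorem minpoly_eq_X_pow_of_pow_eq_zero {K A : Type*} [Field K] [Ring A] [Algebra K A] {a : A}
    {n : ℕ} (ha : a ^ n = 0) (ha' : a ^ (n - 1) ≠ 0) : minpoly K a = X ^ n := by
  have hint : IsIntegral K a := ⟨X ^ n, monic_X_pow n, by simp [ha]⟩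
  obtain ⟨m, hmn, hassoc⟩ :=
    (dvd_prime_pow prime_X n).mp (minpoly.dvd K a (by simp [ha] : aeval a (X ^ n : K[X]) = 0))
  have hmin : minpoly K a = X ^ m :=
    eq_of_monic_of_associated (minpoly.monic hint) (monic_X_pow m) hassoc
  have ham : a ^ m = 0 := by simpa [hmin] using minpoly.aeval K a
  obtain rfl : m = n := by
    by_contra hne
    exact ha' (pow_eq_zero_of_le (by omega) ham)
  exact hmin

namespace Module.End

variable {R M : Type*} [CommRing R] [AddCommGroup M] [Module R M]

def IsCyclicVector (N : Module.End R M) (v : M) : Prop :=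
  Function.Surjective fun p : R[X] => aeval N p v

theorem linearIndependent_pow_apply_of_pow_eq_zero {K V : Type*} [DivisionRing K]
    [AddCommGroup V] [Module K V] {N : Module.End K V} {n : ℕ} (hN : N ^ n = 0) {v : V}
    (hv : (N ^ (n - 1)) v ≠ 0) : LinearIndependent K fun i : Fin n => (N ^ (i : ℕ)) v := by
  rw [Fintype.linearIndependent_iff]
  intro g hg i
  induction i using WellFoundedLT.induction with
  | _ i ih =>
  -- `N ^ (n - 1 - i)` kills the terms of index `> i`, and those of index `< i` vanish by `ih`
  have hsum := congrArg (N ^ (n - 1 - i)) hg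
  rw [map_sum, map_zero, Finset.sum_eq_single i] at hsum
  · rw [map_smul, ← Module.End.mul_apply, ← pow_add, Nat.sub_add_cancel (by omega)] at hsum
    exact (smul_eq_zero.mp hsum).resolve_right hv
  · intro j _ hji
    rcases hji.lt_or_gt with hlt | hgt
    · rw [ih j hlt, zero_smul, map_zero]
    · rw [map_smul, ← Module.End.mul_apply, ← pow_add, pow_eq_zero_of_le (by omega) hN,
        LinearMap.zero_apply, smul_zero]
  · simp

theorem isCyclicVector_of_span_pow_apply_eq_top {N : Module.End R M} {v : M} {n : ℕ}
    (hspan : Submodule.span R (Set.range fun i : Fin n => (N ^ (i : ℕ)) v) = ⊤) :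
    N.IsCyclicVector v := by
  let orbit : R[X] →ₗ[R] M := LinearMap.applyₗ v ∘ₗ (aeval N).toLinearMap
  have hrange : LinearMap.range orbit = ⊤ := by
    refine eq_top_iff.mpr (hspan ▸ Submodule.span_le.mpr ?_)
    rintro _ ⟨i, rfl⟩
    exact ⟨X ^ (i : ℕ), by simp [orbit]⟩
  exact LinearMap.range_eq_top.mp hrange

theorem exists_aeval_eq_of_commute {N T : Module.End R M} {v : M} (hv : N.IsCyclicVector v)
    (hT : Commute T N) : ∃ p : R[X], aeval N p = T := by
  obtain ⟨p, hp : aeval N p v = T v⟩ := hv (T v)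
  refine ⟨p, LinearMap.ext fun w => ?_⟩
  obtain ⟨r, rfl⟩ := hv w
  have hTr : Commute T (aeval N r) :=
    Algebra.commute_of_mem_adjoin_singleton_of_commute (aeval_mem_adjoin_singleton R N) hT
  calc aeval N p (aeval N r v) = aeval N r (aeval N p v) := by
        rw [← Module.End.mul_apply, ← aeval_mul, mul_comm, aeval_mul, Module.End.mul_apply]
    _ = T (aeval N r v) := by rw [hp, ← Module.End.mul_apply, ← hTr.eq, Module.End.mul_apply]

theorem exists_isCyclicVector_of_pow_eq_zero {K V : Type*} [Field K] [AddCommGroup V] [Module K V]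
    [FiniteDimensional K V] {N : Module.End K V} {n : ℕ} (hdim : Module.finrank K V = n)
    (hN : N ^ n = 0) (hN' : N ^ (n - 1) ≠ 0) : ∃ v, N.IsCyclicVector v := by
  obtain ⟨v, hv⟩ : ∃ v, (N ^ (n - 1)) v ≠ 0 := by simpa using DFunLike.ne_iff.mp hN'
  refine ⟨v, isCyclicVector_of_span_pow_apply_eq_top (n := n) ?_⟩
  exact (linearIndependent_pow_apply_of_pow_eq_zero hN hv).span_eq_top_of_card_eq_finrank'
    (by simp [hdim])

end Module.End

theorem AlgHom.range_eq_range_aeval_of_isCyclicVector {R A M : Type*} [CommRing R] [CommRing A]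
    [Algebra R A] [AddCommGroup M] [Module R M] (ρ : A →ₐ[R] Module.End R M) {u : A} {v : M}
    (hv : (ρ u).IsCyclicVector v) : ρ.range = (aeval (ρ u)).range := by
  refine le_antisymm ?_ ?_
  · rintro _ ⟨a, rfl⟩
    exact Module.End.exists_aeval_eq_of_commute hv ((Commute.all a u).map ρ)
  · rintro _ ⟨p, rfl⟩
    exact ⟨aeval u p, (aeval_algHom_apply ρ u p).symm⟩

theorem mA_pow_eq_bot (k : Type) [Field k] (q n : ℕ) : mA k q n ^ n = ⊥ := by
  have : mA k q n = (Ideal.span (Set.range MvPolynomial.X)).map (Ideal.Quotient.mk _) := by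
    rw [Ideal.map_span, ← Set.range_comp]
    rfl
  rw [this, ← Ideal.map_pow, Ideal.map_quotient_self]

theorem pow_eq_zero_of_mem_mA {k : Type} [Field k] {q n : ℕ} {u : Aqn k q n}
    (hu : u ∈ mA k q n) : u ^ n = 0 := by
  simpa [mA_pow_eq_bot] using Ideal.pow_mem_pow hu n

theorem regular_rep_image_iso_general (k : Type) [Field k] (q n : ℕ)
    (V : Type) [AddCommGroup V] [Module k V] [FiniteDimensional k V]
    (hdim : Module.finrank k V = n)
    (ρ : Aqn k q n →ₐ[k] Module.End k V)
    (hreg : ∃ u ∈ mA k q n, ρ (u ^ (n - 1)) ≠ 0) :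
    Nonempty ((Aqn k q n ⧸ RingHom.ker ρ) ≃ₐ[k]
      (Polynomial k ⧸ Ideal.span {(Polynomial.X : Polynomial k) ^ n})) := by
  obtain ⟨u, hu, hreg⟩ := hreg
  have hN : ρ u ^ n = 0 := by rw [← map_pow, pow_eq_zero_of_mem_mA hu, map_zero]
  have hN' : ρ u ^ (n - 1) ≠ 0 := by rwa [← map_pow]
  obtain ⟨v, hv⟩ := Module.End.exists_isCyclicVector_of_pow_eq_zero hdim hN hN'
  have hker : RingHom.ker (aeval (ρ u)) = Ideal.span {(X : k[X]) ^ n} := by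
    rw [minpoly.ker_aeval_eq_span_minpoly, minpoly_eq_X_pow_of_pow_eq_zero hN hN',
      Ideal.submodule_span_eq]
  exact ⟨(Ideal.quotientKerEquivRange ρ).trans <|
    (Subalgebra.equivOfEq _ _ (ρ.range_eq_range_aeval_of_isCyclicVector hv)).trans <|
    (Ideal.quotientKerEquivRange (aeval (ρ u))).symm.trans <|
    Ideal.quotientEquivAlgOfEq k hker⟩

/-- if `ρ` is a regular representation of `A_{q,n}` on an `n`-dimensional
`k`-vector space `V`, then `A_{q,n}/ker ρ` is isomorphic as a `k`-algebra to `k[z]/(z^n)`. -/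
theorem regular_rep_image_iso (k : Type) [Field k] (q n : ℕ) (hq : 1 ≤ q) (hn : 2 ≤ n)
    (V : Type) [AddCommGroup V] [Module k V] [FiniteDimensional k V]
    (hdim : Module.finrank k V = n)
    (ρ : Aqn k q n →ₐ[k] Module.End k V)
    (hreg : ∃ u ∈ mA k q n, ρ (u ^ (n - 1)) ≠ 0) :
    Nonempty ((Aqn k q n ⧸ RingHom.ker ρ) ≃ₐ[k]
      (Polynomial k ⧸ Ideal.span {(Polynomial.X : Polynomial k) ^ n})) :=
  regular_rep_image_iso_general k q n V hdim ρ hreg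
end
end

section
/- Let Z_1, …, Z_q be pairwise commuting k-linear endomorphisms of an n-dimensional k-vector space V with Z_i^n = 0 for all i and Z_1^{n−1} ≠ 0, let ρ : A_{q,n} → End_k(V) be the k-algebra homomorphism with ρ(x_i) = Z_i, and let f_2, …, f_q ∈ k[X] be polynomials with zero constant term such that Z_j = f_j(Z_1) for j = 2, …, q. Then ker(ρ) is the ideal of A_{q,n} generated by the elements x_2 − f_2(x_1), x_3 − f_3(x_1), …, x_q − f_q(x_1). -/
noncomputable section

/-!
Every element of `A_{q,n}` is congruent modulo `I = (x_j - f_j(x_1))` to a polynomial `p(x_1)`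
of degree `< n`, since `x_1^n = 0`. If it lies in `ker ρ`, then `p(Z_1) = 0`; as `Z_1` has
nilpotency index exactly `n`, the powers `1, Z_1, …, Z_1^(n-1)` are linearly independent, so
`p = 0`.
-/

open Polynomial

theorem Polynomial.eq_zero_of_aeval_eq_zero_of_degree_lt {k A : Type*} [Field k] [Ring A]
    [Algebra k A] {z : A} {n : ℕ} (hz : z ^ n = 0) (hz' : z ^ (n - 1) ≠ 0) {p : k[X]}
    (hdeg : p.degree < n) (hp : aeval z p = 0) : p = 0 := by
  by_contra hp0
  set m := p.natTrailingDegree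
  have hmd : m ≤ p.natDegree := natTrailingDegree_le_natDegree p
  have hmn : m < n := hmd.trans_lt ((natDegree_lt_iff_degree_lt hp0).2 hdeg)
  -- multiplying by `z ^ (n - 1 - m)` kills every term of `p(z)` except the lowest one
  have hlow : p.coeff m • z ^ (n - 1) = 0 :=
    calc p.coeff m • z ^ (n - 1)
        = ∑ i ∈ Finset.range (p.natDegree + 1), p.coeff i • z ^ (n - 1 - m + i) := by
          rw [Finset.sum_eq_single_of_mem m (Finset.mem_range.2 (by omega))]
          · rw [show n - 1 - m + m = n - 1 by omega]
          · intro i _ him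
            rcases him.lt_or_gt with hi | hi
            · rw [coeff_eq_zero_of_lt_natTrailingDegree hi, zero_smul]
            · rw [pow_eq_zero_of_le (by omega) hz, smul_zero]
      _ = z ^ (n - 1 - m) * aeval z p := by
          simp only [aeval_eq_sum_range, Finset.mul_sum, mul_smul_comm, pow_add]
      _ = 0 := by rw [hp, mul_zero]
  exact (smul_eq_zero.1 hlow).elim (trailingCoeff_nonzero_iff_nonzero.2 hp0) hz'

theorem Ideal.exists_aeval_sub_mem_of_adjoin_range_eq_top {R A ι : Type*} [CommRing R]
    [CommRing A] [Algebra R A] {x : ι → A} (hx : Algebra.adjoin R (Set.range x) = ⊤)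
    {I : Ideal A} (i₀ : ι) (f : ι → R[X]) (hI : ∀ j ≠ i₀, x j - aeval (x i₀) (f j) ∈ I)
    (a : A) : ∃ p : R[X], a - aeval (x i₀) p ∈ I := by
  set π := Ideal.Quotient.mkₐ R I
  have hπx : ∀ j, π (x j) ∈ Algebra.adjoin R {π (x i₀)} := by
    intro j
    by_cases hj : j = i₀
    · exact Algebra.subset_adjoin (by rw [hj]; rfl)
    · have : π (x j) = aeval (π (x i₀)) (f j) := by
        rw [aeval_algHom_apply, ← sub_eq_zero, ← map_sub]
        exact Ideal.Quotient.eq_zero_iff_mem.2 (hI j hj)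
      rw [this]
      exact aeval_mem_adjoin_singleton R _
  have htop : Algebra.adjoin R (Set.range (π ∘ x)) = ⊤ := by
    rw [Set.range_comp, ← AlgHom.map_adjoin, hx, Algebra.map_top, AlgHom.range_eq_top]
    exact Ideal.Quotient.mkₐ_surjective R I
  have hle : Algebra.adjoin R (Set.range (π ∘ x)) ≤ Algebra.adjoin R {π (x i₀)} :=
    Algebra.adjoin_le (Set.range_subset_iff.2 hπx)
  obtain ⟨p, hp : aeval (π (x i₀)) p = π a⟩ : π a ∈ (aeval (π (x i₀))).range := by
    rw [← Algebra.adjoin_singleton_eq_range_aeval R]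
    exact hle (htop ▸ Algebra.mem_top)
  refine ⟨p, Ideal.Quotient.eq_zero_iff_mem.1 ?_⟩
  rw [← Ideal.Quotient.mkₐ_eq_mk R, map_sub, ← aeval_algHom_apply]
  exact sub_eq_zero.2 hp.symm

theorem adjoin_range_xA_eq_top (k : Type) [Field k] (q n : ℕ) :
    Algebra.adjoin k (Set.range (xA k q n)) = ⊤ := by
  have : Set.range (xA k q n) = Ideal.Quotient.mkₐ k _ '' Set.range MvPolynomial.X := by
    rw [← Set.range_comp]
    rfl
  rw [this, ← AlgHom.map_adjoin, MvPolynomial.adjoin_range_X, Algebra.map_top,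
    AlgHom.range_eq_top]
  exact Ideal.Quotient.mkₐ_surjective k _

theorem xA_pow_eq_zero (k : Type) [Field k] (q n : ℕ) (i : Fin q) : xA k q n i ^ n = 0 := by
  rw [xA, ← map_pow, Ideal.Quotient.eq_zero_iff_mem]
  exact Ideal.pow_mem_pow (Ideal.subset_span (Set.mem_range_self i)) n

theorem ker_of_regular_rep_eq_span_general (k : Type) [Field k] (q n : ℕ) [NeZero q]
    (V : Type) [AddCommGroup V] [Module k V]
    (Z : Fin q → Module.End k V)
    (hnil : ∀ i, Z i ^ n = 0)
    (hreg : Z 0 ^ (n - 1) ≠ 0)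
    (ρ : Aqn k q n →ₐ[k] Module.End k V) (hρ : ∀ i, ρ (xA k q n i) = Z i)
    (f : Fin q → Polynomial k)
    (hfZ : ∀ j : Fin q, j ≠ 0 → Polynomial.aeval (Z 0) (f j) = Z j) :
    RingHom.ker ρ =
      Ideal.span {y : Aqn k q n | ∃ j : Fin q, j ≠ 0 ∧
        y = xA k q n j - Polynomial.aeval (xA k q n 0) (f j)} := by
  set I : Ideal (Aqn k q n) := Ideal.span {y : Aqn k q n | ∃ j : Fin q, j ≠ 0 ∧
    y = xA k q n j - Polynomial.aeval (xA k q n 0) (f j)}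
  have hρx₀ : ∀ p : k[X], ρ (aeval (xA k q n 0) p) = aeval (Z 0) p := fun p => by
    rw [← aeval_algHom_apply, hρ]
  have hIker : I ≤ RingHom.ker ρ := by
    rw [Ideal.span_le]
    rintro _ ⟨j, hj, rfl⟩
    rw [SetLike.mem_coe, RingHom.mem_ker, map_sub, hρ, hρx₀, hfZ j hj, sub_self]
  refine le_antisymm (fun a ha => ?_) hIker
  obtain ⟨p, hp⟩ := Ideal.exists_aeval_sub_mem_of_adjoin_range_eq_top
    (I := I) (adjoin_range_xA_eq_top k q n) 0 f (fun j hj => Ideal.subset_span ⟨j, hj, rfl⟩) a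
  set r := p %ₘ X ^ n
  have hr : aeval (xA k q n 0) r = aeval (xA k q n 0) p :=
    aeval_modByMonic_eq_self_of_root (by rw [map_pow, aeval_X, xA_pow_eq_zero])
  have hrdeg : r.degree < n := by
    simpa using degree_modByMonic_lt p (monic_X_pow n)
  have hZr : aeval (Z 0) r = 0 := by
    have hker := hIker hp
    rwa [← hr, RingHom.mem_ker, map_sub, RingHom.mem_ker.1 ha, zero_sub, neg_eq_zero,
      hρx₀] at hker
  have hr0 : r = 0 := eq_zero_of_aeval_eq_zero_of_degree_lt (hnil 0) hreg hrdeg hZr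
  rwa [← hr, hr0, map_zero, sub_zero] at hp

/-- if `Z_1, …, Z_q` are pairwise commuting nilpotents with `Z_1^(n-1) ≠ 0` and
`Z_j = f_j(Z_1)` for polynomials `f_j` with zero constant term, then the kernel of the induced
representation `ρ : A_{q,n} → End_k(V)` is the ideal generated by the `x_j - f_j(x_1)`. -/
theorem ker_of_regular_rep_eq_span (k : Type) [Field k] (q n : ℕ) [NeZero q]
    (hq : 1 ≤ q) (hn : 2 ≤ n)
    (V : Type) [AddCommGroup V] [Module k V] [FiniteDimensional k V]
    (hdim : Module.finrank k V = n)
    (Z : Fin q → Module.End k V)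
    (hcomm : ∀ i j, Commute (Z i) (Z j))
    (hnil : ∀ i, Z i ^ n = 0)
    (hreg : Z 0 ^ (n - 1) ≠ 0)
    (ρ : Aqn k q n →ₐ[k] Module.End k V) (hρ : ∀ i, ρ (xA k q n i) = Z i)
    (f : Fin q → Polynomial k) (hf0 : ∀ j, (f j).coeff 0 = 0)
    (hfZ : ∀ j : Fin q, j ≠ 0 → Polynomial.aeval (Z 0) (f j) = Z j) :
    RingHom.ker ρ =
      Ideal.span {y : Aqn k q n | ∃ j : Fin q, j ≠ 0 ∧
        y = xA k q n j - Polynomial.aeval (xA k q n 0) (f j)} :=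
  ker_of_regular_rep_eq_span_general k q n V Z hnil hreg ρ hρ f hfZ
end
end

section
/- In A_{q,n}, the intersection of the ideal q_1 generated by x_2, …, x_q with the ideal m² equals the product ideal q_1·m, i.e. q_1 ∩ m² = q_1·m. -/
set_option synthInstance.maxHeartbeats 400000

noncomputable section

/-- The ideal `q_1` of `A_{q,n}` generated by `x_2, …, x_q`. -/
def q1A (k : Type) [Field k] (q n : ℕ) [NeZero q] : Ideal (Aqn k q n) :=
  Ideal.span {y | ∃ i : Fin q, i ≠ 0 ∧ y = xA k q n i}

/-!
Both sides are images of ideals of `k[x_1, …, x_q]` under the quotient map, whose kernel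
`m_0^n` lies in `m_0²` because `n ≥ 2`; hence taking images commutes with the intersection and
it suffices to prove `(x_2, …, x_q) ∩ m_0² = (x_2, …, x_q)·m_0` in the polynomial ring. There
all ideals involved are monomial: a monomial lying in both `(x_2, …, x_q)` and `m_0²` is divisible
by some `x_i` with `i ≠ 1` and has degree at least 2, so it is `x_i` times a monomial of positive
degree.
-/

namespace Ideal

variable {R S : Type*} [Ring R] [Ring S]

theorem map_inf_of_ker_le {f : R →+* S} (hf : Function.Surjective f) {I J : Ideal R}
    (h : RingHom.ker f ≤ J) : map f (I ⊓ J) = map f I ⊓ map f J := by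
  calc map f (I ⊓ J) = map f (RingHom.ker f ⊔ I ⊓ J) := by
        rw [map_sup, (map_eq_bot_iff_le_ker f).2 le_rfl, bot_sup_eq]
    _ = map f (comap f (map f I) ⊓ comap f (map f J)) := by
        rw [comap_map_of_surjective' f hf, comap_map_of_surjective' f hf, sup_eq_left.2 h,
          sup_comm I, sup_inf_assoc_of_le I h]
    _ = map f I ⊓ map f J := map_inf_comap_of_surjective f hf _ _

end Ideal

namespace MvPolynomial

variable {σ R : Type*} [CommSemiring R]

theorem mem_ideal_of_forall_monomial_mem {I : Ideal (MvPolynomial σ R)} {f : MvPolynomial σ R}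
    (h : ∀ m ∈ f.support, monomial m 1 ∈ I) : f ∈ I := by
  rw [f.as_sum]
  refine Ideal.sum_mem _ fun m hm => ?_
  simpa [C_mul_monomial] using I.mul_mem_left (C (f.coeff m)) (h m hm)

theorem monomial_mem_span_X_image_mul_idealOfVars {s : Set σ} {m : σ →₀ ℕ} {i : σ}
    (hi : i ∈ s) (hmi : m i ≠ 0) (hm : 2 ≤ m.degree) :
    monomial m (1 : R) ∈ Ideal.span (X '' s) * idealOfVars σ R := by
  obtain ⟨m', rfl⟩ := le_iff_exists_add.1 (Finsupp.single_le_iff.2 (Nat.one_le_iff_ne_zero.2 hmi))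
  have hm' : 1 ≤ m'.degree := by
    rw [map_add, Finsupp.degree_single] at hm
    omega
  have hmem : monomial m' (1 : R) ∈ idealOfVars σ R := by
    rw [← pow_one (idealOfVars σ R), mem_pow_idealOfVars_iff]
    intro x hx
    rwa [Finset.mem_singleton.1 (support_monomial_subset hx)]
  rw [← mul_one (1 : R), ← monomial_mul]
  exact Ideal.mul_mem_mul (Ideal.subset_span ⟨i, hi, rfl⟩) hmem

theorem span_X_image_inf_idealOfVars_sq (s : Set σ) :
    Ideal.span (X '' s) ⊓ idealOfVars σ R ^ 2 = Ideal.span (X '' s) * idealOfVars σ R := by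
  apply le_antisymm
  · rintro f ⟨hs, h2⟩
    refine mem_ideal_of_forall_monomial_mem fun m hm => ?_
    obtain ⟨i, hi, hmi⟩ := mem_ideal_span_X_image.1 hs m hm
    exact monomial_mem_span_X_image_mul_idealOfVars hi hmi
      ((mem_pow_idealOfVars_iff 2 f).1 h2 m hm)
  · rw [pow_two]
    exact le_inf Ideal.mul_le_left
      (Ideal.mul_mono_left (Ideal.span_mono (Set.image_subset_range _ _)))

end MvPolynomial

open MvPolynomial

theorem mA_eq_map_idealOfVars (k : Type) [Field k] (q n : ℕ) :
    mA k q n = (idealOfVars (Fin q) k).map (Ideal.Quotient.mk _) := by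
  rw [mA, Ideal.map_span, ← Set.range_comp]
  rfl

theorem q1A_eq_map_span_X (k : Type) [Field k] (q n : ℕ) [NeZero q] :
    q1A k q n = (Ideal.span (X '' {i | i ≠ 0})).map (Ideal.Quotient.mk _) := by
  rw [q1A, Ideal.map_span, Set.image_image]
  congr 1
  ext y
  simp [xA, eq_comm]

theorem q1_inf_m_sq_eq_q1_mul_m_general (k : Type) [Field k] (q n : ℕ) [NeZero q]
    (hn : 2 ≤ n) :
    q1A k q n ⊓ (mA k q n) ^ 2 = q1A k q n * mA k q n := by
  have hker : RingHom.ker (Ideal.Quotient.mk (idealOfVars (Fin q) k ^ n)) ≤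
      idealOfVars (Fin q) k ^ 2 := by
    rw [Ideal.mk_ker]
    exact Ideal.pow_le_pow_right hn
  rw [q1A_eq_map_span_X, mA_eq_map_idealOfVars, ← Ideal.map_pow, ← Ideal.map_mul,
    ← Ideal.map_inf_of_ker_le Ideal.Quotient.mk_surjective hker,
    span_X_image_inf_idealOfVars_sq]

/-- in `A_{q,n}` one has `q_1 ∩ m² = q_1·m`. -/
theorem q1_inf_m_sq_eq_q1_mul_m (k : Type) [Field k] (q n : ℕ) [NeZero q]
    (hq : 2 ≤ q) (hn : 2 ≤ n) :
    q1A k q n ⊓ (mA k q n) ^ 2 = q1A k q n * mA k q n :=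
  q1_inf_m_sq_eq_q1_mul_m_general k q n hn
end
end

section
/- A linearly trivial k-algebra automorphism σ ∈ I_{q,n} of A_{q,n} satisfies σ(q_1) = q_1 if and only if σ(x_i) − x_i ∈ q_1·m for every i = 2, …, q. Consequently, the map σ ↦ (σ(x_1) − x_1, (σ(x_i) − x_i)_{i=2,…,q}) is a bijection from I_{q,n} ∩ G_1 onto m² × (q_1·m)^{q−1}. -/
set_option synthInstance.maxHeartbeats 400000

noncomputable section

/-!
A polynomial lying in `(x_2, …, x_q)` and in `m_0²` has each monomial divisible by some
`x_i`, `i ≥ 2`, and of degree at least two, so it lies in `q_1·m`; this gives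
`q_1 ∩ m² ⊆ q_1·m` and the direct implication. Conversely, if `σ(x_i) ≡ x_i` modulo `q_1·m`
for `i ≥ 2`, then `q_1 ⊆ σ(q_1) + m·q_1`, and Nakayama's lemma (`m` is nilpotent) gives
`σ(q_1) = q_1`.

For the bijection: `σ` is determined by the `σ(x_i)`, and every substitution
`x_i ↦ x_i + F_i` with `F_i ∈ m²` is an automorphism, since `φ - id` maps `m^j` into
`m^(j+1)`, hence is nilpotent, and `φ = id + (φ - id)` is invertible.
-/

open MvPolynomial

theorem Ideal.map_inf_map_le_of_ker_le {R S : Type*} [CommRing R] [CommRing S] {f : R →+* S}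
    (hf : Function.Surjective f) {I K : Ideal R} (hK : RingHom.ker f ≤ K) :
    I.map f ⊓ K.map f ≤ (I ⊓ K).map f := by
  rintro _ ⟨hI, hfK⟩
  obtain ⟨p, hp, rfl⟩ := (Ideal.mem_map_iff_of_surjective f hf).1 hI
  have hpK : p ∈ K ⊔ RingHom.ker f := by
    rw [RingHom.ker_eq_comap_bot, ← Ideal.comap_map_of_surjective f hf]
    exact hfK
  exact Ideal.mem_map_of_mem f ⟨hp, sup_eq_left.2 hK ▸ hpK⟩

theorem MvPolynomial.span_X_image_inf_sq_le {σ R : Type*} [CommSemiring R] (s : Set σ) :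
    Ideal.span (X '' s) ⊓ idealOfVars σ R ^ 2 ≤ Ideal.span (X '' s) * idealOfVars σ R := by
  rintro p ⟨hs, hsq⟩
  rw [SetLike.mem_coe, mem_ideal_span_X_image] at hs
  rw [SetLike.mem_coe, mem_pow_idealOfVars_iff] at hsq
  rw [p.as_sum]
  refine Ideal.sum_mem _ fun v hv => ?_
  obtain ⟨i, hi, hvi⟩ := hs v hv
  have hle : Finsupp.single i 1 ≤ v := Finsupp.single_le_iff.2 (Nat.one_le_iff_ne_zero.2 hvi)
  set w := v - Finsupp.single i 1
  have hvw : v = w + Finsupp.single i 1 := (tsub_add_cancel_of_le hle).symm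
  have hw : monomial w (coeff v p) ∈ idealOfVars σ R := by
    rw [← pow_one (idealOfVars σ R), mem_pow_idealOfVars_iff]
    intro x hx
    obtain rfl := Finset.mem_singleton.1 (support_monomial_subset hx)
    have := hsq v hv
    rw [hvw, map_add, Finsupp.degree_single] at this
    omega
  have hX : monomial v (coeff v p) = X i * monomial w (coeff v p) := by
    rw [mul_comm, ← pow_one (X i), ← monomial_add_single, ← hvw]
  rw [hX]
  exact Ideal.mul_mem_mul (Ideal.subset_span ⟨i, hi, rfl⟩) hw

namespace RingHom

variable {A : Type*} [CommRing A] (φ : A →+* A)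

theorem sub_mem_sq_of_mem_span {s : Set A} (h₀ : ∀ a, φ a - a ∈ Ideal.span s)
    (hs : ∀ x ∈ s, φ x - x ∈ Ideal.span s ^ 2) {a : A} (ha : a ∈ Ideal.span s) :
    φ a - a ∈ Ideal.span s ^ 2 := by
  induction ha using Submodule.span_induction with
  | mem x hx => exact hs x hx
  | zero => simp
  | add x y _ _ hx hy => simpa [add_sub_add_comm] using add_mem hx hy
  | smul r x hx hxsq =>
    have hφx : φ x ∈ Ideal.span s := by
      simpa using add_mem (Ideal.pow_le_self two_ne_zero hxsq) hx
    have : φ (r • x) - r • x = (φ r - r) * φ x + r * (φ x - x) := by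
      simp only [smul_eq_mul, map_mul]; ring
    rw [this, sq]
    exact add_mem (Ideal.mul_mem_mul (h₀ r) hφx)
      (Ideal.mul_mem_left _ r (by rwa [sq] at hxsq))

variable {m : Ideal A}

theorem sub_mem_pow_succ (h₀ : ∀ a, φ a - a ∈ m) (h₁ : ∀ a ∈ m, φ a - a ∈ m ^ 2) :
    ∀ {j : ℕ} {a : A}, a ∈ m ^ j → φ a - a ∈ m ^ (j + 1)
  | 0, a, _ => by simpa using h₀ a
  | j + 1, a, ha => by
    rw [pow_succ] at ha
    refine Submodule.mul_induction_on ha (fun b hb c hc => ?_) (fun x y hx hy => ?_)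
    · have hφc : φ c ∈ m := by
        simpa using add_mem (Ideal.pow_le_self two_ne_zero (h₁ c hc)) hc
      have : φ (b * c) - b * c = (φ b - b) * φ c + b * (φ c - c) := by
        rw [map_mul]; ring
      rw [this]
      refine add_mem ?_ ?_
      · rw [pow_succ]
        exact Ideal.mul_mem_mul (sub_mem_pow_succ h₀ h₁ hb) hφc
      · rw [show j + 1 + 1 = j + 2 from rfl, pow_add]
        exact Ideal.mul_mem_mul hb (h₁ c hc)
    · simpa [add_sub_add_comm] using add_mem hx hy

theorem bijective_of_sub_mem_pow {n : ℕ} (hm : m ^ n = ⊥) (h₀ : ∀ a, φ a - a ∈ m)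
    (h₁ : ∀ a ∈ m, φ a - a ∈ m ^ 2) : Function.Bijective φ := by
  set η : Module.End ℤ A := φ.toAddMonoidHom.toIntLinearMap - LinearMap.id
  have hη : ∀ j a, (η ^ j) a ∈ m ^ j := by
    intro j
    induction j with
    | zero => simp
    | succ j ih =>
      intro a
      rw [pow_succ' η, Module.End.mul_apply]
      exact sub_mem_pow_succ φ h₀ h₁ (ih a)
  have hnil : IsNilpotent η := ⟨n, LinearMap.ext fun a => by simpa [hm] using hη n a⟩
  have hφη : (1 + η : Module.End ℤ A) = φ.toAddMonoidHom.toIntLinearMap := by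
    rw [Module.End.one_eq_id, add_sub_cancel]
  have := (Module.End.isUnit_iff _).1 hnil.isUnit_one_add
  rwa [hφη] at this

end RingHom

namespace Aqn

variable {k : Type} [Field k] {q n : ℕ}

theorem algHom_ext {B : Type*} [Semiring B] [Algebra k B] {f g : Aqn k q n →ₐ[k] B}
    (h : ∀ i, f (xA k q n i) = g (xA k q n i)) : f = g :=
  Ideal.Quotient.algHom_ext k (MvPolynomial.algHom_ext h)

theorem mA_eq_map : mA k q n = (idealOfVars (Fin q) k).map (Ideal.Quotient.mk _) := by
  rw [Ideal.map_span, ← Set.range_comp]; rfl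

theorem mA_pow_eq_bot : mA k q n ^ n = ⊥ := by
  rw [mA_eq_map, ← Ideal.map_pow]
  exact Ideal.map_quotient_self _

theorem mA_le_jacobson_bot : mA k q n ≤ Ideal.jacobson ⊥ := fun x hx =>
  Ideal.radical_le_jacobson ⟨n, by simpa [mA_pow_eq_bot] using Ideal.pow_mem_pow hx n⟩

theorem sub_mem_mA (φ : Aqn k q n →ₐ[k] Aqn k q n)
    (h : ∀ i, φ (xA k q n i) - xA k q n i ∈ mA k q n) (a : Aqn k q n) : φ a - a ∈ mA k q n := by
  have : (Ideal.Quotient.mkₐ k (mA k q n)).comp φ = Ideal.Quotient.mkₐ k (mA k q n) :=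
    algHom_ext fun i => Ideal.Quotient.eq.2 (h i)
  exact Ideal.Quotient.eq.1 (DFunLike.congr_fun this a)

theorem bijective_of_sub_mem_sq (φ : Aqn k q n →ₐ[k] Aqn k q n)
    (h : ∀ i, φ (xA k q n i) - xA k q n i ∈ mA k q n ^ 2) : Function.Bijective φ := by
  have h₀ := sub_mem_mA φ fun i => Ideal.pow_le_self two_ne_zero (h i)
  refine RingHom.bijective_of_sub_mem_pow φ.toRingHom mA_pow_eq_bot h₀ fun a ha => ?_
  refine RingHom.sub_mem_sq_of_mem_span φ.toRingHom h₀ ?_ ha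
  rintro _ ⟨i, rfl⟩
  exact h i

def substₐ (F : Fin q → Aqn k q n) (hF : ∀ i, F i ∈ mA k q n) : Aqn k q n →ₐ[k] Aqn k q n :=
  Ideal.Quotient.liftₐ _ (aeval fun i => xA k q n i + F i) fun a ha => by
    have hle : (idealOfVars (Fin q) k ^ n).map (aeval fun i => xA k q n i + F i) ≤ ⊥ := by
      rw [Ideal.map_pow, ← mA_pow_eq_bot (k := k) (q := q) (n := n)]
      refine Ideal.pow_right_mono ?_ n
      rw [Ideal.map_span, Ideal.span_le]
      rintro _ ⟨_, ⟨i, rfl⟩, rfl⟩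
      rw [SetLike.mem_coe, aeval_X]
      exact add_mem (Ideal.subset_span ⟨i, rfl⟩) (hF i)
    exact hle (Ideal.mem_map_of_mem _ ha)

theorem substₐ_xA (F : Fin q → Aqn k q n) (hF : ∀ i, F i ∈ mA k q n) (i : Fin q) :
    substₐ F hF (xA k q n i) = xA k q n i + F i :=
  aeval_X _ i

theorem exists_algEquiv_sub_eq (F : Fin q → Aqn k q n) (hF : ∀ i, F i ∈ mA k q n ^ 2) :
    ∃ σ : Aqn k q n ≃ₐ[k] Aqn k q n, ∀ i, σ (xA k q n i) - xA k q n i = F i := by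
  have hF₁ i := Ideal.pow_le_self two_ne_zero (hF i)
  have hsub i : substₐ F hF₁ (xA k q n i) - xA k q n i = F i := by simp [substₐ_xA]
  exact ⟨.ofBijective (substₐ F hF₁) (bijective_of_sub_mem_sq _ fun i => hsub i ▸ hF i), hsub⟩

variable [NeZero q]

theorem q1A_le_iff {I : Ideal (Aqn k q n)} : q1A k q n ≤ I ↔ ∀ i, i ≠ 0 → xA k q n i ∈ I := by
  rw [q1A, Ideal.span_le]
  exact ⟨fun h i hi => h ⟨i, hi, rfl⟩, by rintro h _ ⟨i, hi, rfl⟩; exact h i hi⟩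

theorem xA_mem_q1A {i : Fin q} (hi : i ≠ 0) : xA k q n i ∈ q1A k q n :=
  q1A_le_iff.1 le_rfl i hi

theorem q1A_mul_mA_le_mA_sq : q1A k q n * mA k q n ≤ mA k q n ^ 2 :=
  sq (mA k q n) ▸ Ideal.mul_mono_left (q1A_le_iff.2 fun i _ => Ideal.subset_span ⟨i, rfl⟩)

theorem q1A_fg : (q1A k q n).FG :=
  Submodule.fg_def.2
    ⟨_, (Set.finite_range (xA k q n)).subset (by rintro _ ⟨i, -, rfl⟩; exact ⟨i, rfl⟩), rfl⟩

theorem q1A_eq_map :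
    q1A k q n = (Ideal.span (X '' {i | i ≠ 0})).map (Ideal.Quotient.mk _) := by
  rw [Ideal.map_span, ← Set.image_comp, q1A]
  congr 1
  ext y
  simp [xA, eq_comm]

theorem q1A_inf_mA_sq_le (hn : 2 ≤ n) :
    q1A k q n ⊓ mA k q n ^ 2 ≤ q1A k q n * mA k q n := by
  rw [q1A_eq_map, mA_eq_map, ← Ideal.map_pow, ← Ideal.map_mul]
  refine (Ideal.map_inf_map_le_of_ker_le Ideal.Quotient.mk_surjective ?_).trans
    (Ideal.map_mono (span_X_image_inf_sq_le _))
  rw [Ideal.mk_ker]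
  exact Ideal.pow_le_pow_right hn

theorem map_q1A_eq_of_sub_mem (σ : Aqn k q n ≃ₐ[k] Aqn k q n)
    (h : ∀ i, i ≠ 0 → σ (xA k q n i) - xA k q n i ∈ q1A k q n * mA k q n) :
    Ideal.map σ (q1A k q n) = q1A k q n := by
  refine le_antisymm (Ideal.map_le_iff_le_comap.2 (q1A_le_iff.2 fun i hi => ?_)) ?_
  · rw [Ideal.mem_comap, ← sub_add_cancel (σ (xA k q n i)) (xA k q n i)]
    exact add_mem (Ideal.mul_le_left (h i hi)) (xA_mem_q1A hi)
  · refine Submodule.le_of_le_smul_of_le_jacobson_bot (R := Aqn k q n) (I := mA k q n)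
      (N := Ideal.map σ (q1A k q n)) q1A_fg mA_le_jacobson_bot
      (q1A_le_iff.2 fun i hi => ?_)
    rw [← sub_sub_cancel (σ (xA k q n i)) (xA k q n i), smul_eq_mul, mul_comm]
    exact sub_mem (Ideal.mem_sup_left (Ideal.mem_map_of_mem σ (xA_mem_q1A hi)))
      (Ideal.mem_sup_right (h i hi))

theorem map_q1A_eq_iff (hn : 2 ≤ n) (σ : Aqn k q n ≃ₐ[k] Aqn k q n)
    (hσ : ∀ i, σ (xA k q n i) - xA k q n i ∈ mA k q n ^ 2) :
    Ideal.map σ (q1A k q n) = q1A k q n ↔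
      ∀ i, i ≠ 0 → σ (xA k q n i) - xA k q n i ∈ q1A k q n * mA k q n := by
  refine ⟨fun hσq i hi => q1A_inf_mA_sq_le hn ⟨?_, hσ i⟩, map_q1A_eq_of_sub_mem σ⟩
  exact sub_mem (hσq ▸ Ideal.mem_map_of_mem σ (xA_mem_q1A hi)) (xA_mem_q1A hi)

end Aqn

theorem lin_trivial_stabilizer_of_q1_general (k : Type) [Field k] (q n : ℕ) [NeZero q]
    (hn : 2 ≤ n) :
    (∀ σ : Aqn k q n ≃ₐ[k] Aqn k q n,
      (∀ i, σ (xA k q n i) - xA k q n i ∈ (mA k q n) ^ 2) →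
        (Ideal.map σ (q1A k q n) = q1A k q n ↔
          ∀ i : Fin q, i ≠ 0 → σ (xA k q n i) - xA k q n i ∈ q1A k q n * mA k q n)) ∧
    Set.BijOn
      (fun σ : Aqn k q n ≃ₐ[k] Aqn k q n =>
        ((σ (xA k q n 0) - xA k q n 0,
          fun i : {i : Fin q // i ≠ 0} => σ (xA k q n i.1) - xA k q n i.1) :
          Aqn k q n × ({i : Fin q // i ≠ 0} → Aqn k q n)))
      {σ | (∀ i, σ (xA k q n i) - xA k q n i ∈ (mA k q n) ^ 2) ∧
        Ideal.map σ (q1A k q n) = q1A k q n}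
      {p | p.1 ∈ (mA k q n) ^ 2 ∧ ∀ i, p.2 i ∈ q1A k q n * mA k q n} := by
  have hiff := Aqn.map_q1A_eq_iff (k := k) (q := q) hn
  refine ⟨hiff, fun σ ⟨hσ, hσq⟩ => ⟨hσ 0, fun i => (hiff σ hσ).1 hσq i.1 i.2⟩, ?_, ?_⟩
  · rintro σ - τ - hστ
    simp only [Prod.mk.injEq, sub_left_inj, funext_iff] at hστ
    refine AlgEquiv.coe_toAlgHom_injective (Aqn.algHom_ext fun i => ?_)
    by_cases hi : i = 0
    · exact hi ▸ hστ.1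
    · exact hστ.2 ⟨i, hi⟩
  · rintro ⟨a, b⟩ ⟨ha, hb⟩
    let F : Fin q → Aqn k q n := fun i => if hi : i = 0 then a else b ⟨i, hi⟩
    have hF i : F i ∈ mA k q n ^ 2 := by
      by_cases hi : i = 0
      · simpa [F, hi] using ha
      · simpa [F, hi] using Aqn.q1A_mul_mA_le_mA_sq (hb ⟨i, hi⟩)
    obtain ⟨σ, hσ⟩ := Aqn.exists_algEquiv_sub_eq F hF
    refine ⟨σ, ⟨fun i => hσ i ▸ hF i, (hiff σ fun i => hσ i ▸ hF i).2 fun i hi => ?_⟩, ?_⟩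
    · simpa [hσ, F, hi] using hb ⟨i, hi⟩
    · exact Prod.ext ((hσ 0).trans (dif_pos rfl)) (funext fun i => (hσ i).trans (dif_neg i.2))

/-- a linearly trivial automorphism `σ` stabilizes `q_1` iff
`σ(x_i) - x_i ∈ q_1·m` for all `i ≥ 2`; consequently
`σ ↦ (σ(x_1) - x_1, (σ(x_i) - x_i)_{i ≥ 2})` is a bijection from `I_{q,n} ∩ G_1`
onto `m² × (q_1·m)^(q-1)`. -/
theorem lin_trivial_stabilizer_of_q1 (k : Type) [Field k] (q n : ℕ) [NeZero q]
    (hq : 2 ≤ q) (hn : 2 ≤ n) :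
    (∀ σ : Aqn k q n ≃ₐ[k] Aqn k q n,
      (∀ i, σ (xA k q n i) - xA k q n i ∈ (mA k q n) ^ 2) →
        (Ideal.map σ (q1A k q n) = q1A k q n ↔
          ∀ i : Fin q, i ≠ 0 → σ (xA k q n i) - xA k q n i ∈ q1A k q n * mA k q n)) ∧
    Set.BijOn
      (fun σ : Aqn k q n ≃ₐ[k] Aqn k q n =>
        ((σ (xA k q n 0) - xA k q n 0,
          fun i : {i : Fin q // i ≠ 0} => σ (xA k q n i.1) - xA k q n i.1) :
          Aqn k q n × ({i : Fin q // i ≠ 0} → Aqn k q n)))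
      {σ | (∀ i, σ (xA k q n i) - xA k q n i ∈ (mA k q n) ^ 2) ∧
        Ideal.map σ (q1A k q n) = q1A k q n}
      {p | p.1 ∈ (mA k q n) ^ 2 ∧ ∀ i, p.2 i ∈ q1A k q n * mA k q n} :=
  lin_trivial_stabilizer_of_q1_general k q n hn
end
end
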